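/- arXiv:1506.04573 — 2 statements merged into one kernel-verified Lean document; each statement's English description precedes it below -/
import Mathlib

section
/- Let P_S and P_T be two domains on X × Y with Y = {−1,1}, let D_T denote the marginal of P_T on X, and let A ⊆ X × Y be a measurable set with P_S(Aᶜ) = 0 such that the restriction of P_T to A is absolutely continuous with respect to P_S with density ρ. Define β_∞ as the P_S-essential supremum of ρ, and define η_{T∖S} = P_T(Aᶜ) · sup_{h∈H} R_{T∖S}(h), where T∖S is the conditional distribution of P_T given Aᶜ (η_{T∖S} := 0 when P_T(Aᶜ) = 0). Then for every posterior distribution Q on H: R_{P_T}(G_Q) ≤ (1/2)·d_{D_T}(Q) + β_∞ · e_{P_S}(Q) + η_{T∖S}. -/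
/-!
Per point `z = (x, y)`, binary labels give
`1[h x ≠ y] + 1[h' x ≠ y] = 1[h x ≠ h' x] + 2 · 1[h x ≠ y] · 1[h' x ≠ y]`; averaging over
`h, h' ∼ Q` and then over `P_T` yields `R_{P_T}(G_Q) = ½ d_{D_T}(Q) + e_{P_T}(Q)`.
Split `e_{P_T}(Q)` along `A` and `Aᶜ`: on `A`, `P_T` has density `ρ ≤ β_∞` (`P_S`-a.e.) with
respect to `P_S`; on `Aᶜ`, the joint error is at most the Gibbs loss, a `Q`-average of risks of
single classifiers under `P_T(· | Aᶜ)`, each bounded by their supremum.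
-/

open MeasureTheory ProbabilityTheory Real
open scoped ENNReal Classical

noncomputable section

def mismatch (a b : Bool) : ℝ≥0∞ := if a ≠ b then 1 else 0

lemma mismatch_add_mismatch (a b y : Bool) :
    mismatch a y + mismatch b y = mismatch a b + 2 * (mismatch a y * mismatch b y) := by
  cases a <;> cases b <;> cases y <;> norm_num [mismatch]

lemma mismatch_le_one (a b : Bool) : mismatch a b ≤ 1 := by
  unfold mismatch; split_ifs <;> simp

lemma toReal_mismatch (a b : Bool) : (mismatch a b).toReal = if a ≠ b then 1 else 0 := by
  unfold mismatch; split_ifs <;> simp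

lemma toReal_mismatch_mul_mismatch (a b y : Bool) :
    (mismatch a y * mismatch b y).toReal = if a ≠ y ∧ b ≠ y then 1 else 0 := by
  unfold mismatch; split_ifs <;> simp_all

@[fun_prop]
lemma Measurable.mismatch {α : Type*} [MeasurableSpace α] {f g : α → Bool} (hf : Measurable f)
    (hg : Measurable g) : Measurable fun a => mismatch (f a) (g a) :=
  (Measurable.of_discrete : Measurable (Function.uncurry _root_.mismatch)).comp (hf.prodMk hg)

section
variable {α : Type*} [MeasurableSpace α] {μ : Measure α}

lemma integral_toReal_of_le_one [IsFiniteMeasure μ] {f : α → ℝ≥0∞} (hf : AEMeasurable f μ)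
    (hf1 : ∀ a, f a ≤ 1) : ∫ a, (f a).toReal ∂μ = (∫⁻ a, f a ∂μ).toReal :=
  integral_toReal hf (ae_of_all _ fun a => (hf1 a).trans_lt ENNReal.one_lt_top)

lemma ofReal_integral_toReal_of_le_one [IsFiniteMeasure μ] {f : α → ℝ≥0∞}
    (hf : AEMeasurable f μ) (hf1 : ∀ a, f a ≤ 1) :
    ENNReal.ofReal (∫ a, (f a).toReal ∂μ) = ∫⁻ a, f a ∂μ := by
  rw [integral_toReal_of_le_one hf hf1, ENNReal.ofReal_toReal]
  exact ((lintegral_mono hf1).trans_lt (lintegral_const_lt_top ENNReal.one_ne_top)).ne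

lemma integral_le_one_of_abs_le_one [IsZeroOrProbabilityMeasure μ] {f : α → ℝ}
    (hf : ∀ a, |f a| ≤ 1) : ∫ a, f a ∂μ ≤ 1 :=
  calc ∫ a, f a ∂μ ≤ ‖∫ a, f a ∂μ‖ := Real.le_norm_self _
    _ ≤ 1 * μ.real Set.univ := norm_integral_le_of_norm_le_const (ae_of_all _ hf)
    _ ≤ 1 := by simp [measureReal_le_one]

lemma lintegral_lintegral_add_eq_two_mul [IsProbabilityMeasure μ] {f : α → ℝ≥0∞}
    (hf : Measurable f) :
    ∫⁻ a, ∫⁻ b, (f a + f b) ∂μ ∂μ = 2 * ∫⁻ a, f a ∂μ := by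
  have inner : ∀ a, ∫⁻ b, (f a + f b) ∂μ = f a + ∫⁻ b, f b ∂μ := fun a => by
    rw [lintegral_add_right _ hf, lintegral_const, measure_univ, mul_one]
  rw [lintegral_congr inner, lintegral_add_left hf, lintegral_const, measure_univ, mul_one,
    two_mul]

lemma lintegral_ofReal_le_ofReal_iSup [IsProbabilityMeasure μ] {r : α → ℝ}
    (hr : BddAbove (Set.range r)) : ∫⁻ a, ENNReal.ofReal (r a) ∂μ ≤ ENNReal.ofReal (⨆ a, r a) :=
  lintegral_le_const (ae_of_all _ fun a => ENNReal.ofReal_le_ofReal (le_ciSup hr a))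

lemma lintegral_withDensity_le_essSup_mul {ρ : α → ℝ≥0∞} (hρ : Measurable ρ)
    {f : α → ℝ≥0∞} (hf : Measurable f) :
    ∫⁻ a, f a ∂μ.withDensity ρ ≤ essSup ρ μ * ∫⁻ a, f a ∂μ :=
  calc ∫⁻ a, f a ∂μ.withDensity ρ = ∫⁻ a, ρ a * f a ∂μ :=
        lintegral_withDensity_eq_lintegral_mul μ hρ hf
    _ ≤ ∫⁻ a, essSup ρ μ * f a ∂μ :=
        lintegral_mono_ae <| (ENNReal.ae_le_essSup ρ).mono fun a ha => by gcongr
    _ = essSup ρ μ * ∫⁻ a, f a ∂μ := lintegral_const_mul _ hf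

lemma setLIntegral_eq_measure_mul_lintegral_cond {s : Set α} (hs : μ s ≠ ∞) (f : α → ℝ≥0∞) :
    ∫⁻ a in s, f a ∂μ = μ s * ∫⁻ a, f a ∂μ[|s] := by
  by_cases h0 : μ s = 0
  · simp [Measure.restrict_eq_zero.mpr h0, h0]
  · rw [ProbabilityTheory.cond, lintegral_smul_measure, smul_eq_mul, ← mul_assoc,
      ENNReal.mul_inv_cancel h0 hs, one_mul]

end

section
variable {X Ω : Type*} [MeasurableSpace Ω]

def gibbsLoss (ev : Ω → X → Bool) (Q : Measure Ω) (z : X × Bool) : ℝ≥0∞ :=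
  ∫⁻ h, mismatch (ev h z.1) z.2 ∂Q

def disagreement (ev : Ω → X → Bool) (Q : Measure Ω) (x : X) : ℝ≥0∞ :=
  ∫⁻ h, ∫⁻ h', mismatch (ev h x) (ev h' x) ∂Q ∂Q

def jointError (ev : Ω → X → Bool) (Q : Measure Ω) (z : X × Bool) : ℝ≥0∞ :=
  ∫⁻ h, ∫⁻ h', mismatch (ev h z.1) z.2 * mismatch (ev h' z.1) z.2 ∂Q ∂Q

variable {ev : Ω → X → Bool} {Q : Measure Ω}

lemma gibbsLoss_le_one [IsProbabilityMeasure Q] (z : X × Bool) : gibbsLoss ev Q z ≤ 1 :=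
  lintegral_le_const (ae_of_all _ fun _ => mismatch_le_one _ _)

lemma disagreement_le_one [IsProbabilityMeasure Q] (x : X) : disagreement ev Q x ≤ 1 :=
  lintegral_le_const <| ae_of_all _ fun _ =>
    lintegral_le_const (ae_of_all _ fun _ => mismatch_le_one _ _)

variable [MeasurableSpace X]

lemma measurable_gibbsLoss (hev : Measurable (Function.uncurry ev)) [SFinite Q] :
    Measurable (gibbsLoss ev Q) := by
  unfold gibbsLoss; fun_prop

lemma measurable_disagreement (hev : Measurable (Function.uncurry ev)) [SFinite Q] :
    Measurable (disagreement ev Q) := by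
  unfold disagreement; fun_prop

lemma jointError_eq_sq (hev : Measurable (Function.uncurry ev)) (z : X × Bool) :
    jointError ev Q z = gibbsLoss ev Q z ^ 2 := by
  have hm : Measurable fun h => mismatch (ev h z.1) z.2 := by fun_prop
  rw [jointError, lintegral_lintegral_mul hm.aemeasurable hm.aemeasurable, sq, gibbsLoss]

lemma measurable_jointError (hev : Measurable (Function.uncurry ev)) [SFinite Q] :
    Measurable (jointError ev Q) := by
  simp_rw [funext (jointError_eq_sq (Q := Q) hev)]
  exact (measurable_gibbsLoss hev).pow_const 2

lemma jointError_le_gibbsLoss (hev : Measurable (Function.uncurry ev)) [IsProbabilityMeasure Q]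
    (z : X × Bool) : jointError ev Q z ≤ gibbsLoss ev Q z := by
  rw [jointError_eq_sq hev, sq]
  exact mul_le_of_le_one_left' (gibbsLoss_le_one z)

lemma two_mul_gibbsLoss (hev : Measurable (Function.uncurry ev)) [IsProbabilityMeasure Q]
    (z : X × Bool) :
    2 * gibbsLoss ev Q z = disagreement ev Q z.1 + 2 * jointError ev Q z := by
  have hm : Measurable fun h => mismatch (ev h z.1) z.2 := by fun_prop
  rw [gibbsLoss, ← lintegral_lintegral_add_eq_two_mul hm]
  set g := gibbsLoss ev Q z
  simp_rw [mismatch_add_mismatch]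
  calc ∫⁻ h, ∫⁻ h', (mismatch (ev h z.1) (ev h' z.1)
          + 2 * (mismatch (ev h z.1) z.2 * mismatch (ev h' z.1) z.2)) ∂Q ∂Q
      = ∫⁻ h, (∫⁻ h', mismatch (ev h z.1) (ev h' z.1) ∂Q
          + 2 * (mismatch (ev h z.1) z.2 * g)) ∂Q :=
        lintegral_congr fun h => by
          rw [lintegral_add_right _ ((hm.const_mul _).const_mul _),
            lintegral_const_mul _ (hm.const_mul _), lintegral_const_mul _ hm]
          rfl
    _ = disagreement ev Q z.1 + 2 * (g * g) := by
        rw [lintegral_add_right _ ((hm.mul_const _).const_mul _),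
          lintegral_const_mul _ (hm.mul_const _), lintegral_mul_const _ hm]
        rfl
    _ = disagreement ev Q z.1 + 2 * jointError ev Q z := by rw [jointError_eq_sq hev, sq]

lemma gibbsLoss_eq_half_disagreement_add_jointError (hev : Measurable (Function.uncurry ev))
    [IsProbabilityMeasure Q] (z : X × Bool) :
    gibbsLoss ev Q z = 2⁻¹ * disagreement ev Q z.1 + jointError ev Q z := by
  have h2 : (2 : ℝ≥0∞) ≠ 0 := two_ne_zero
  have h2' : (2 : ℝ≥0∞) ≠ ∞ := ENNReal.ofNat_ne_top
  rw [← ENNReal.inv_mul_cancel_left h2 h2' (b := gibbsLoss ev Q z), two_mul_gibbsLoss hev, mul_add,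
    ENNReal.inv_mul_cancel_left h2 h2']

lemma lintegral_gibbsLoss_eq_half_disagreement_add_jointError
    (hev : Measurable (Function.uncurry ev)) [IsProbabilityMeasure Q]
    (μ : Measure (X × Bool)) :
    ∫⁻ z, gibbsLoss ev Q z ∂μ
      = 2⁻¹ * ∫⁻ x, disagreement ev Q x ∂(μ.map Prod.fst) + ∫⁻ z, jointError ev Q z ∂μ := by
  simp_rw [gibbsLoss_eq_half_disagreement_add_jointError hev]
  rw [lintegral_add_right _ (measurable_jointError hev),
    lintegral_const_mul' _ _ (ENNReal.inv_ne_top.mpr two_ne_zero),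
    lintegral_map (measurable_disagreement hev) measurable_fst]

lemma ofReal_integral_risk (hev : Measurable (Function.uncurry ev)) (ν : Measure (X × Bool))
    [IsFiniteMeasure ν] (h : Ω) :
    ENNReal.ofReal (∫ z, (if ev h z.1 ≠ z.2 then (1 : ℝ) else 0) ∂ν)
      = ∫⁻ z, mismatch (ev h z.1) z.2 ∂ν := by
  simp_rw [← toReal_mismatch]
  exact ofReal_integral_toReal_of_le_one (by fun_prop) fun _ => mismatch_le_one _ _

lemma ofReal_integral_gibbsRisk (hev : Measurable (Function.uncurry ev)) [IsProbabilityMeasure Q]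
    (μ : Measure (X × Bool)) [IsFiniteMeasure μ] :
    ENNReal.ofReal (∫ z, ∫ h, (if ev h z.1 ≠ z.2 then (1 : ℝ) else 0) ∂Q ∂μ)
      = ∫⁻ z, gibbsLoss ev Q z ∂μ := by
  have inner : ∀ z : X × Bool,
      ∫ h, (if ev h z.1 ≠ z.2 then (1 : ℝ) else 0) ∂Q = (gibbsLoss ev Q z).toReal := fun z => by
    simp_rw [← toReal_mismatch]
    exact integral_toReal_of_le_one (by fun_prop) fun _ => mismatch_le_one _ _
  simp_rw [inner]
  exact ofReal_integral_toReal_of_le_one (measurable_gibbsLoss hev).aemeasurable gibbsLoss_le_one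

lemma ofReal_integral_disagreement (hev : Measurable (Function.uncurry ev))
    [IsProbabilityMeasure Q] (ν : Measure X) [IsFiniteMeasure ν] :
    ENNReal.ofReal (∫ x, ∫ h, ∫ h', (if ev h x ≠ ev h' x then (1 : ℝ) else 0) ∂Q ∂Q ∂ν)
      = ∫⁻ x, disagreement ev Q x ∂ν := by
  have inner : ∀ x, ∫ h, ∫ h', (if ev h x ≠ ev h' x then (1 : ℝ) else 0) ∂Q ∂Q
      = (disagreement ev Q x).toReal := fun x => by
    simp_rw [← toReal_mismatch]
    have hin : ∀ h, ∫ h', (mismatch (ev h x) (ev h' x)).toReal ∂Q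
        = (∫⁻ h', mismatch (ev h x) (ev h' x) ∂Q).toReal := fun h =>
      integral_toReal_of_le_one (by fun_prop) fun _ => mismatch_le_one _ _
    simp_rw [hin]
    exact integral_toReal_of_le_one (by fun_prop)
      fun _ => lintegral_le_const (ae_of_all _ fun _ => mismatch_le_one _ _)
  simp_rw [inner]
  exact ofReal_integral_toReal_of_le_one (measurable_disagreement hev).aemeasurable
    disagreement_le_one

lemma ofReal_integral_jointError (hev : Measurable (Function.uncurry ev))
    [IsProbabilityMeasure Q] (μ : Measure (X × Bool)) [IsFiniteMeasure μ] :
    ENNReal.ofReal (∫ z, ∫ h, ∫ h',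
        (if ev h z.1 ≠ z.2 ∧ ev h' z.1 ≠ z.2 then (1 : ℝ) else 0) ∂Q ∂Q ∂μ)
      = ∫⁻ z, jointError ev Q z ∂μ := by
  have inner : ∀ z : X × Bool, ∫ h, ∫ h',
      (if ev h z.1 ≠ z.2 ∧ ev h' z.1 ≠ z.2 then (1 : ℝ) else 0) ∂Q ∂Q
      = (jointError ev Q z).toReal := fun z => by
    simp_rw [← toReal_mismatch_mul_mismatch]
    have hin : ∀ h, ∫ h', (mismatch (ev h z.1) z.2 * mismatch (ev h' z.1) z.2).toReal ∂Q
        = (∫⁻ h', mismatch (ev h z.1) z.2 * mismatch (ev h' z.1) z.2 ∂Q).toReal := fun h =>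
      integral_toReal_of_le_one (by fun_prop)
        fun _ => mul_le_one' (mismatch_le_one _ _) (mismatch_le_one _ _)
    simp_rw [hin]
    exact integral_toReal_of_le_one (by fun_prop) fun _ => lintegral_le_const <|
      ae_of_all _ fun _ => mul_le_one' (mismatch_le_one _ _) (mismatch_le_one _ _)
  simp_rw [inner]
  exact ofReal_integral_toReal_of_le_one (measurable_jointError hev).aemeasurable
    fun z => (jointError_le_gibbsLoss hev z).trans (gibbsLoss_le_one z)

lemma setLIntegral_gibbsLoss_le (hev : Measurable (Function.uncurry ev)) [IsProbabilityMeasure Q]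
    (μ : Measure (X × Bool)) [IsFiniteMeasure μ] (s : Set (X × Bool)) :
    ∫⁻ z in s, gibbsLoss ev Q z ∂μ ≤ ENNReal.ofReal ((μ s).toReal *
      ⨆ h, ∫ z, (if ev h z.1 ≠ z.2 then (1 : ℝ) else 0) ∂μ[|s]) := by
  set r := fun h => ∫ z, (if ev h z.1 ≠ z.2 then (1 : ℝ) else 0) ∂μ[|s]
  have hr : BddAbove (Set.range r) := ⟨1, Set.forall_mem_range.2 fun h =>
    integral_le_one_of_abs_le_one fun z => by split_ifs <;> simp⟩
  have hs : μ s ≠ ∞ := measure_ne_top μ s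
  calc ∫⁻ z in s, gibbsLoss ev Q z ∂μ = ∫⁻ h, ∫⁻ z in s, mismatch (ev h z.1) z.2 ∂μ ∂Q :=
        lintegral_lintegral_swap (by fun_prop)
    _ = ∫⁻ h, μ s * ENNReal.ofReal (r h) ∂Q := by
        simp_rw [setLIntegral_eq_measure_mul_lintegral_cond hs, r, ofReal_integral_risk hev]
    _ = μ s * ∫⁻ h, ENNReal.ofReal (r h) ∂Q := lintegral_const_mul' _ _ hs
    _ ≤ μ s * ENNReal.ofReal (⨆ h, r h) := by grw [lintegral_ofReal_le_ofReal_iSup hr]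
    _ = _ := by rw [ENNReal.ofReal_mul ENNReal.toReal_nonneg, ENNReal.ofReal_toReal hs]

end

theorem domain_adaptation_bound_inf_general
    {X : Type*} [MeasurableSpace X] {Ω : Type*} [MeasurableSpace Ω]
    (ev : Ω → X → Bool) (hev : Measurable (Function.uncurry ev))
    (PS PT : Measure (X × Bool)) [IsProbabilityMeasure PS] [IsProbabilityMeasure PT]
    (A : Set (X × Bool)) (hA : MeasurableSet A)
    (ρ : X × Bool → ℝ≥0∞) (hρ : Measurable ρ)
    (hdens : PT.restrict A = PS.withDensity ρ)
    (Q : Measure Ω) [IsProbabilityMeasure Q] :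
    -- R_{P_T}(G_Q) ≤ (1/2) d_{D_T}(Q) + β_∞ · e_{P_S}(Q) + η_{T∖S}
    ENNReal.ofReal (∫ z, ∫ h, (if ev h z.1 ≠ z.2 then (1 : ℝ) else 0) ∂Q ∂PT)
      ≤ ENNReal.ofReal ((1 / 2) * ∫ x, ∫ h, ∫ h',
            (if ev h x ≠ ev h' x then (1 : ℝ) else 0) ∂Q ∂Q ∂(PT.map Prod.fst))
        + essSup ρ PS
            * ENNReal.ofReal (∫ z, ∫ h, ∫ h',
                (if ev h z.1 ≠ z.2 ∧ ev h' z.1 ≠ z.2 then (1 : ℝ) else 0) ∂Q ∂Q ∂PS)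
        + ENNReal.ofReal ((PT Aᶜ).toReal *
            ⨆ h : Ω, ∫ z, (if ev h z.1 ≠ z.2 then (1 : ℝ) else 0) ∂(PT[|Aᶜ])) := by
  rw [ofReal_integral_gibbsRisk hev, ENNReal.ofReal_mul (by norm_num),
    ofReal_integral_disagreement hev, ofReal_integral_jointError hev, one_div,
    ENNReal.ofReal_inv_of_pos two_pos, ENNReal.ofReal_ofNat, add_assoc]
  calc ∫⁻ z, gibbsLoss ev Q z ∂PT
      = 2⁻¹ * ∫⁻ x, disagreement ev Q x ∂(PT.map Prod.fst)
        + (∫⁻ z in A, jointError ev Q z ∂PT + ∫⁻ z in Aᶜ, jointError ev Q z ∂PT) := by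
        rw [lintegral_gibbsLoss_eq_half_disagreement_add_jointError hev, lintegral_add_compl _ hA]
    _ ≤ 2⁻¹ * ∫⁻ x, disagreement ev Q x ∂(PT.map Prod.fst)
        + (essSup ρ PS * ∫⁻ z, jointError ev Q z ∂PS + ∫⁻ z in Aᶜ, gibbsLoss ev Q z ∂PT) := by
        gcongr
        · rw [hdens]
          exact lintegral_withDensity_le_essSup_mul hρ (measurable_jointError hev)
        · exact jointError_le_gibbsLoss hev _
    _ ≤ _ := by grw [setLIntegral_gibbsLoss_le hev PT Aᶜ]

theorem domain_adaptation_bound_inf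
    {X : Type*} [MeasurableSpace X] {Ω : Type*} [MeasurableSpace Ω]
    (ev : Ω → X → Bool) (hev : Measurable (Function.uncurry ev))
    (PS PT : Measure (X × Bool)) [IsProbabilityMeasure PS] [IsProbabilityMeasure PT]
    (A : Set (X × Bool)) (hA : MeasurableSet A) (hSA : PS Aᶜ = 0)
    (ρ : X × Bool → ℝ≥0∞) (hρ : Measurable ρ)
    (hdens : PT.restrict A = PS.withDensity ρ)
    (Q : Measure Ω) [IsProbabilityMeasure Q] :
    -- R_{P_T}(G_Q) ≤ (1/2) d_{D_T}(Q) + β_∞ · e_{P_S}(Q) + η_{T∖S}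
    ENNReal.ofReal (∫ z, ∫ h, (if ev h z.1 ≠ z.2 then (1 : ℝ) else 0) ∂Q ∂PT)
      ≤ ENNReal.ofReal ((1 / 2) * ∫ x, ∫ h, ∫ h',
            (if ev h x ≠ ev h' x then (1 : ℝ) else 0) ∂Q ∂Q ∂(PT.map Prod.fst))
        + essSup ρ PS
            * ENNReal.ofReal (∫ z, ∫ h, ∫ h',
                (if ev h z.1 ≠ z.2 ∧ ev h' z.1 ≠ z.2 then (1 : ℝ) else 0) ∂Q ∂Q ∂PS)
        + ENNReal.ofReal ((PT Aᶜ).toReal *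
            ⨆ h : Ω, ∫ z, (if ev h z.1 ≠ z.2 then (1 : ℝ) else 0) ∂(PT[|Aᶜ])) :=
  domain_adaptation_bound_inf_general ev hev PS PT A hA ρ hρ hdens Q
end
end

section
/- Let P_S and P_T be domains on X × Y with Y = {−1,1}, D_T the marginal of P_T on X, and let A ⊆ X × Y be a measurable set with P_S(Aᶜ) = 0 such that the restriction of P_T to A is absolutely continuous with respect to P_S with density ρ; let β_∞ be the P_S-essential supremum of ρ and η_{T∖S} = P_T(Aᶜ)·sup_{h∈H} R_{T∖S}(h) (zero when P_T(Aᶜ)=0), where T∖S is the conditional of P_T given Aᶜ. Let π be a prior on H, b > 0, c > 0, δ ∈ (0,1], and set b' = (b/(1−e^{−b}))·β_∞ and c' = c/(1−e^{−c}). Then with probability at least 1 − δ over the draw of S ∼ (P_S)^{m_s} and T ∼ (D_T)^{m_t} (independent), simultaneously for all posteriors Q on H: R_{P_T}(G_Q) ≤ c'·(1/2)·d̂_T(Q) + b'·ê_S(Q) + η_{T∖S} + ( c'/(m_t·c) + b'/(m_s·b) ) · ( 2·KL(Q‖π) + ln(2/δ) ), where d̂_T(Q) and ê_S(Q) are the empirical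 expected disagreement on T and the empirical expected joint error on S. -/
/-!
For a pair of hypotheses `(h, h')` drawn from `Q ⊗ Q`, the disagreement `1[h x ≠ h' x]` and the
joint error `1[h x ≠ y ∧ h' x ≠ y]` are `{0, 1}`-valued losses with expectations `2 p (1 - p)` and
`p²`, where `p z` is the `Q`-probability of misclassifying `z`; hence the Gibbs risk
`E_T[p] = ½ d_T(Q) + e_T(Q)`. The part of `e_T(Q)` on `A` is at most `β_∞ e_S(Q)` through the
density `ρ`, and the part on `Aᶜ` is at most `P_T(Aᶜ) sup_h R_{T∖S}(h)` because `p² ≤ p`.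

Both `d_T` and `e_S` are then controlled by Catoni's PAC-Bayes bound with prior `π ⊗ π` and
confidence `δ / 2`: for a loss with values in `[0, 1]`, convexity of `exp` makes the exponential
moment of `(1 - e^{-c}) L(w) - c ℓ(w, z)` at most one, Markov's inequality bounds its `π`-average
on a sample with high probability, and the Donsker–Varadhan change of measure transfers this to
every posterior at the price of `KL(Q ⊗ Q ‖ π ⊗ π) ≤ 2 KL(Q ‖ π)`. The two samples are independent,
so both good events hold with probability at least `(1 - δ/2)² ≥ 1 - δ`.
-/

open MeasureTheory ProbabilityTheory Real
open scoped ENNReal Classical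

noncomputable section

/-- Kullback–Leibler divergence, `∞` in the degenerate cases. -/
def klDivergence {Ω : Type*} [MeasurableSpace Ω] (Q pr : Measure Ω) : ℝ≥0∞ :=
  if Q ≪ pr ∧ Integrable (llr Q pr) Q then ENNReal.ofReal (∫ h, llr Q pr h ∂Q) else ∞

namespace PacBayes

open InformationTheory

section Auxiliary

variable {α : Type*} [MeasurableSpace α] {μ : Measure α}

lemma integrable_of_nonneg_of_le_one [IsFiniteMeasure μ] {f : α → ℝ} (hf : Measurable f)
    (h0 : ∀ x, 0 ≤ f x) (h1 : ∀ x, f x ≤ 1) : Integrable f μ :=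
  .of_bound hf.aestronglyMeasurable 1
    (.of_forall fun x => by rw [Real.norm_eq_abs, abs_le]; exact ⟨by linarith [h0 x], h1 x⟩)

lemma integral_le_one_of_nonneg_of_le_one [IsProbabilityMeasure μ] {f : α → ℝ}
    (h0 : ∀ x, 0 ≤ f x) (h1 : ∀ x, f x ≤ 1) : ∫ x, f x ∂μ ≤ 1 :=
  (integral_mono_of_nonneg (.of_forall h0) (integrable_const 1) (.of_forall h1)).trans_eq
    (by simp)

lemma ofReal_one_sub_le_of_measure_compl_le [IsProbabilityMeasure μ] {s : Set α} {δ : ℝ}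
    (hδ : 0 ≤ δ) (h : μ sᶜ ≤ ENNReal.ofReal δ) : ENNReal.ofReal (1 - δ) ≤ μ s := by
  have : 1 ≤ μ s + μ sᶜ := by simpa using measure_union_le (μ := μ) s sᶜ
  rw [ENNReal.ofReal_sub _ hδ, ENNReal.ofReal_one, tsub_le_iff_right]
  exact this.trans (by gcongr)

lemma measurable_uncurry_comp {β γ δ : Type*} [MeasurableSpace β] [MeasurableSpace γ]
    [MeasurableSpace δ] {e : α → β → γ} (he : Measurable (Function.uncurry e)) {f : δ → α}
    {g : δ → β} (hf : Measurable f) (hg : Measurable g) : Measurable fun x => e (f x) (g x) :=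
  he.comp (hf.prodMk hg)

lemma measurable_ite_ne {f g : α → Bool} (hf : Measurable f) (hg : Measurable g) :
    Measurable fun x => if f x ≠ g x then (1 : ℝ) else 0 :=
  Measurable.ite (measurableSet_eq_fun hf hg).compl measurable_const measurable_const

lemma integrable_ite_ne [IsFiniteMeasure μ] {f g : α → Bool} (hf : Measurable f)
    (hg : Measurable g) : Integrable (fun x => if f x ≠ g x then (1 : ℝ) else 0) μ :=
  integrable_of_nonneg_of_le_one (measurable_ite_ne hf hg)
    (fun _ => ite_nonneg zero_le_one le_rfl) fun _ => ite_le_one le_rfl zero_le_one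

end Auxiliary

/-- The Donsker–Varadhan change of measure: this is `KL(Q ‖ prior.tilted f) ≥ 0`. -/
lemma integral_le_toReal_klDiv_add_log_integral_exp {W : Type*} [MeasurableSpace W]
    {Q prior : Measure W} [IsProbabilityMeasure Q] [IsProbabilityMeasure prior]
    (hKL : klDiv Q prior ≠ ∞) {f : W → ℝ} (hfQ : Integrable f Q)
    (hfprior : Integrable (fun w => exp (f w)) prior) :
    ∫ w, f w ∂Q ≤ (klDiv Q prior).toReal + log (∫ w, exp (f w) ∂prior) := by
  obtain ⟨hac, hint⟩ := klDiv_ne_top_iff.1 hKL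
  have := isProbabilityMeasure_tilted hfprior
  have h := toReal_klDiv (hac.trans (absolutelyContinuous_tilted hfprior))
    (integrable_llr_tilted_right hac hfQ hint hfprior)
  rw [integral_llr_tilted_right hac hfQ hfprior hint] at h
  rw [toReal_klDiv hac hint]
  simp only [probReal_univ, add_sub_cancel_right] at h ⊢
  linarith [(klDiv Q (prior.tilted f)).toReal_nonneg]

lemma klDivergence_eq_klDiv {Ω : Type*} [MeasurableSpace Ω] (Q pr : Measure Ω)
    [IsProbabilityMeasure Q] [IsProbabilityMeasure pr] : klDivergence Q pr = klDiv Q pr := by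
  rw [klDivergence]
  split_ifs with h
  · simp [klDiv_of_ac_of_integrable h.1 h.2]
  · exact (klDiv_eq_top_iff.2 fun hac hint => h ⟨hac, hint⟩).symm

lemma klDiv_prod_le {α β : Type*} [MeasurableSpace α] [MeasurableSpace β]
    (μ₁ ν₁ : Measure α) (μ₂ ν₂ : Measure β) [IsProbabilityMeasure μ₁] [IsProbabilityMeasure ν₁]
    [IsProbabilityMeasure μ₂] [IsProbabilityMeasure ν₂] :
    klDiv (μ₁.prod μ₂) (ν₁.prod ν₂) ≤ klDiv μ₁ ν₁ + klDiv μ₂ ν₂ := by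
  rw [← Measure.compProd_const, ← Measure.compProd_const, klDiv_compProd_eq_add]
  gcongr
  rw [Measure.compProd_const, Measure.compProd_const, ← Measure.prod_swap (μ := μ₂),
    ← Measure.prod_swap (μ := ν₂)]
  calc _ ≤ klDiv (μ₂.prod μ₁) (ν₂.prod μ₁) := klDiv_map_le _ _ measurable_swap
    _ = klDiv μ₂ ν₂ := by
      rw [← Measure.compProd_const, ← Measure.compProd_const, klDiv_compProd_left]

section Catoni

lemma exp_neg_mul_le_one_sub_mul (c : ℝ) {t : ℝ} (h0 : 0 ≤ t) (h1 : t ≤ 1) :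
    exp (-c * t) ≤ 1 - (1 - exp (-c)) * t := by
  have := convexOn_exp.2 (Set.mem_univ 0) (Set.mem_univ (-c)) (sub_nonneg.2 h1) h0
    (sub_add_cancel 1 t)
  simp only [smul_eq_mul, mul_zero, zero_add, exp_zero, mul_one] at this
  rw [mul_comm]
  linarith

variable {Z W : Type*} [MeasurableSpace Z]

lemma integral_exp_catoni_le_one (D : Measure Z) [IsProbabilityMeasure D] (c : ℝ) {f : Z → ℝ}
    (hf : Measurable f) (h0 : ∀ z, 0 ≤ f z) (h1 : ∀ z, f z ≤ 1) :
    ∫ z, exp ((1 - exp (-c)) * ∫ z', f z' ∂D - c * f z) ∂D ≤ 1 := by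
  set a := (1 - exp (-c)) * ∫ z', f z' ∂D
  have hfi : Integrable f D := integrable_of_nonneg_of_le_one hf h0 h1
  calc ∫ z, exp (a - c * f z) ∂D ≤ ∫ z, exp a * (1 - (1 - exp (-c)) * f z) ∂D := by
        refine integral_mono_of_nonneg (.of_forall fun _ => (exp_pos _).le)
          (((integrable_const _).sub (hfi.const_mul _)).const_mul _) (.of_forall fun z => ?_)
        dsimp only
        rw [sub_eq_add_neg, exp_add, ← neg_mul]
        exact mul_le_mul_of_nonneg_left (exp_neg_mul_le_one_sub_mul c (h0 z) (h1 z))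
          (exp_pos a).le
    _ = exp a * (1 - a) := by
        rw [integral_const_mul, integral_sub (integrable_const _) (hfi.const_mul _),
          integral_const_mul]
        simp [a]
    _ ≤ exp a * exp (-a) := by gcongr; linarith [add_one_le_exp (-a)]
    _ = 1 := by rw [← exp_add, add_neg_cancel, exp_zero]

def catoniBound (c : ℝ) (m : ℕ) (empirical : ℝ) (complexity : ℝ≥0∞) : ℝ≥0∞ :=
  ENNReal.ofReal (c / (1 - exp (-c))) * ENNReal.ofReal empirical
    + ENNReal.ofReal (c / (1 - exp (-c))) / ENNReal.ofReal (m * c) * complexity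

/-- For `m = 0` or `κ = ∞` the bound is `∞`. -/
lemma ofReal_le_catoniBound {c g a S : ℝ} {m : ℕ} {κ : ℝ≥0∞} (hc : 0 < c) (hg : 0 < g)
    (hS : 0 ≤ S) (h : κ ≠ ∞ → 0 < m → (1 - exp (-c)) * (m * a) ≤ c * S + (κ.toReal + g)) :
    ENNReal.ofReal a ≤ catoniBound c m ((1 / m) * S) (κ + ENNReal.ofReal g) := by
  have hlam : 0 < 1 - exp (-c) := by simpa using exp_lt_one_iff.2 (neg_lt_zero.2 hc)
  have hcoef : 0 < c / (1 - exp (-c)) := div_pos hc hlam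
  have hcoef' : ENNReal.ofReal (c / (1 - exp (-c))) ≠ 0 := (ENNReal.ofReal_pos.2 hcoef).ne'
  rcases eq_or_ne κ ∞ with rfl | hκ
  · rw [catoniBound, top_add, ENNReal.mul_top
      (ENNReal.div_pos_iff.2 ⟨hcoef', ENNReal.ofReal_ne_top⟩).ne', add_top]
    exact le_top
  rcases Nat.eq_zero_or_pos m with rfl | hm
  · rw [catoniBound, Nat.cast_zero, zero_mul, ENNReal.ofReal_zero, ENNReal.div_zero hcoef',
      ENNReal.top_mul (by simp [hg]), add_top]
    exact le_top
  have hmc : 0 < (m : ℝ) * c := mul_pos (Nat.cast_pos.2 hm) hc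
  have key : a ≤ c / (1 - exp (-c)) * ((1 / m) * S)
      + c / (1 - exp (-c)) / (m * c) * (κ.toReal + g) := by
    have := h hκ hm
    field_simp
    nlinarith
  refine (ENNReal.ofReal_le_ofReal key).trans_eq ?_
  rw [catoniBound, ENNReal.ofReal_add (by positivity) (by positivity),
    ENNReal.ofReal_mul hcoef.le, ENNReal.ofReal_mul (div_pos hcoef hmc).le,
    ENNReal.ofReal_div_of_pos hmc, ENNReal.ofReal_add ENNReal.toReal_nonneg hg.le,
    ENNReal.ofReal_toReal hκ]

def catoniExponent (D : Measure Z) (ℓ : W → Z → ℝ) (c : ℝ) {m : ℕ} (s : Fin m → Z) (w : W) :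
    ℝ :=
  ∑ i, ((1 - exp (-c)) * ∫ z, ℓ w z ∂D - c * ℓ w (s i))

def catoniMoment [MeasurableSpace W] (D : Measure Z) (ℓ : W → Z → ℝ) (c : ℝ)
    (prior : Measure W) {m : ℕ} (s : Fin m → Z) : ℝ≥0∞ :=
  ∫⁻ w, ENNReal.ofReal (exp (catoniExponent D ℓ c s w)) ∂prior

variable (D : Measure Z) [IsProbabilityMeasure D] {ℓ : W → Z → ℝ} (hℓ0 : ∀ w z, 0 ≤ ℓ w z)
  (hℓ1 : ∀ w z, ℓ w z ≤ 1) (c : ℝ) {m : ℕ}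

include hℓ0 hℓ1 in
lemma abs_catoniExponent_le (s : Fin m → Z) (w : W) :
    |catoniExponent D ℓ c s w| ≤ m * (|1 - exp (-c)| + |c|) := by
  have hL : |∫ z, ℓ w z ∂D| ≤ 1 := by
    rw [abs_of_nonneg (integral_nonneg (hℓ0 w))]
    exact integral_le_one_of_nonneg_of_le_one (hℓ0 w) (hℓ1 w)
  have hℓ (z : Z) : |ℓ w z| ≤ 1 := abs_le.2 ⟨by linarith [hℓ0 w z], hℓ1 w z⟩
  calc |catoniExponent D ℓ c s w| ≤ ∑ i : Fin m, (|1 - exp (-c)| + |c|) := by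
        refine (Finset.abs_sum_le_sum_abs _ _).trans (Finset.sum_le_sum fun i _ => ?_)
        refine (abs_sub _ _).trans (add_le_add ?_ ?_) <;> rw [abs_mul]
        · exact mul_le_of_le_one_right (abs_nonneg _) hL
        · exact mul_le_of_le_one_right (abs_nonneg _) (hℓ _)
    _ = m * (|1 - exp (-c)| + |c|) := by simp [mul_add]

include hℓ0 hℓ1 in
lemma norm_exp_catoniExponent_le (s : Fin m → Z) (w : W) :
    ‖exp (catoniExponent D ℓ c s w)‖ ≤ exp (m * (|1 - exp (-c)| + |c|)) := by
  rw [Real.norm_eq_abs, abs_of_pos (exp_pos _)]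
  exact exp_le_exp.2 ((le_abs_self _).trans (abs_catoniExponent_le D hℓ0 hℓ1 c s w))

variable [MeasurableSpace W] (hℓ : Measurable (Function.uncurry ℓ))

include hℓ in
lemma measurable_catoniExponent :
    Measurable fun q : (Fin m → Z) × W => catoniExponent D ℓ c q.1 q.2 := by
  have hL : Measurable fun w => ∫ z, ℓ w z ∂D :=
    hℓ.stronglyMeasurable.integral_prod_right'.measurable
  refine Finset.measurable_sum _ fun i _ => ((hL.comp measurable_snd).const_mul _).sub ?_
  exact (measurable_uncurry_comp hℓ measurable_snd
    ((measurable_pi_apply i).comp measurable_fst)).const_mul c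

include hℓ hℓ0 hℓ1 in
lemma lintegral_exp_catoniExponent_le_one (w : W) :
    ∫⁻ s, ENNReal.ofReal (exp (catoniExponent D ℓ c s w)) ∂(Measure.pi fun _ : Fin m => D)
      ≤ 1 := by
  have hint : Integrable (fun s => exp (catoniExponent D ℓ c s w))
      (Measure.pi fun _ : Fin m => D) :=
    .of_bound ((measurable_catoniExponent D c hℓ).comp
      (measurable_id.prodMk measurable_const)).exp.aestronglyMeasurable _
      (.of_forall fun s => norm_exp_catoniExponent_le D hℓ0 hℓ1 c s w)
  rw [← ofReal_integral_eq_lintegral_ofReal hint (.of_forall fun _ => (exp_pos _).le),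
    ENNReal.ofReal_le_one]
  simp_rw [catoniExponent, exp_sum]
  rw [integral_fintype_prod_eq_prod
    (fun _ z => exp ((1 - exp (-c)) * ∫ z, ℓ w z ∂D - c * ℓ w z))]
  exact Finset.prod_le_one (fun _ _ => integral_nonneg fun _ => (exp_pos _).le)
    fun _ _ => integral_exp_catoni_le_one D c hℓ.of_uncurry_left (hℓ0 w) (hℓ1 w)

include hℓ hℓ0 hℓ1 in
lemma measure_catoniMoment_ge_le (prior : Measure W) [IsProbabilityMeasure prior] {δ : ℝ}
    (hδ : 0 < δ) :
    (Measure.pi fun _ : Fin m => D) {s | ENNReal.ofReal δ⁻¹ ≤ catoniMoment D ℓ c prior s}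
      ≤ ENNReal.ofReal δ := by
  have hF : Measurable fun q : (Fin m → Z) × W =>
      ENNReal.ofReal (exp (catoniExponent D ℓ c q.1 q.2)) :=
    (measurable_catoniExponent D c hℓ).exp.ennreal_ofReal
  refine (meas_ge_le_lintegral_div hF.lintegral_prod_right'.aemeasurable (by simpa using hδ)
    ENNReal.ofReal_ne_top).trans ?_
  rw [lintegral_lintegral_swap hF.aemeasurable]
  calc _ ≤ (∫⁻ _ : W, 1 ∂prior) / ENNReal.ofReal δ⁻¹ := by
        gcongr with w
        exact lintegral_exp_catoniExponent_le_one D hℓ0 hℓ1 c hℓ w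
    _ = ENNReal.ofReal δ := by simp [ENNReal.ofReal_inv_of_pos hδ]

include hℓ hℓ0 hℓ1 in
lemma catoni_of_catoniMoment_lt (prior : Measure W) [IsProbabilityMeasure prior] {δ : ℝ}
    (hδ : 0 < δ) {s : Fin m → Z} (hs : catoniMoment D ℓ c prior s < ENNReal.ofReal δ⁻¹)
    (Q : Measure W) [IsProbabilityMeasure Q] (hKL : klDiv Q prior ≠ ∞) :
    (1 - exp (-c)) * (m * ∫ w, ∫ z, ℓ w z ∂D ∂Q)
      ≤ c * ∑ i, ∫ w, ℓ w (s i) ∂Q + ((klDiv Q prior).toReal + log δ⁻¹) := by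
  have hF : Measurable (catoniExponent D ℓ c s) :=
    (measurable_catoniExponent D c hℓ).comp (measurable_const.prodMk measurable_id)
  have hFQ : Integrable (catoniExponent D ℓ c s) Q :=
    .of_bound hF.aestronglyMeasurable _ (.of_forall (abs_catoniExponent_le D hℓ0 hℓ1 c s))
  have hexp : Integrable (fun w => exp (catoniExponent D ℓ c s w)) prior :=
    .of_bound hF.exp.aestronglyMeasurable _
      (.of_forall (norm_exp_catoniExponent_le D hℓ0 hℓ1 c s))
  have hL : Integrable (fun w => ∫ z, ℓ w z ∂D) Q :=
    integrable_of_nonneg_of_le_one hℓ.stronglyMeasurable.integral_prod_right'.measurable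
      (fun w => integral_nonneg (hℓ0 w))
      (fun w => integral_le_one_of_nonneg_of_le_one (hℓ0 w) (hℓ1 w))
  have hℓs (i : Fin m) : Integrable (fun w => ℓ w (s i)) Q :=
    integrable_of_nonneg_of_le_one hℓ.of_uncurry_right (hℓ0 · _) (hℓ1 · _)
  have hintegral : ∫ w, catoniExponent D ℓ c s w ∂Q
      = (1 - exp (-c)) * (m * ∫ w, ∫ z, ℓ w z ∂D ∂Q) - c * ∑ i, ∫ w, ℓ w (s i) ∂Q := by
    simp only [catoniExponent]
    rw [integral_finsetSum _ fun i _ => by exact (hL.const_mul _).sub ((hℓs i).const_mul _)]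
    simp only [integral_sub (hL.const_mul _) ((hℓs _).const_mul _), integral_const_mul,
      Finset.sum_sub_distrib, Finset.sum_const, Finset.card_univ, Fintype.card_fin,
      nsmul_eq_mul, Finset.mul_sum]
    ring
  have hmoment : ∫ w, exp (catoniExponent D ℓ c s w) ∂prior ≤ δ⁻¹ := by
    rw [← ENNReal.ofReal_le_ofReal_iff (inv_pos.2 hδ).le,
      ofReal_integral_eq_lintegral_ofReal hexp (.of_forall fun _ => (exp_pos _).le)]
    exact hs.le
  have hDV := integral_le_toReal_klDiv_add_log_integral_exp hKL hFQ hexp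
  have hlog := log_le_log (integral_exp_pos hexp) hmoment
  linarith

include hℓ hℓ0 hℓ1 in
theorem catoni_bound (prior : Measure W) [IsProbabilityMeasure prior] (hc : 0 < c) {δ : ℝ}
    (hδ0 : 0 < δ) (hδ1 : δ < 1) :
    ENNReal.ofReal (1 - δ) ≤ (Measure.pi fun _ : Fin m => D)
      {s | ∀ Q : Measure W, IsProbabilityMeasure Q →
        ENNReal.ofReal (∫ w, ∫ z, ℓ w z ∂D ∂Q)
          ≤ catoniBound c m ((1 / m) * ∑ i, ∫ w, ℓ w (s i) ∂Q)
              (klDiv Q prior + ENNReal.ofReal (log δ⁻¹))} := by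
  refine ofReal_one_sub_le_of_measure_compl_le hδ0.le ((measure_mono fun s hs => ?_).trans
    (measure_catoniMoment_ge_le D hℓ0 hℓ1 c hℓ prior hδ0))
  by_contra hlt
  exact hs fun Q _ => ofReal_le_catoniBound hc (log_pos (one_lt_inv_iff₀.2 ⟨hδ0, hδ1⟩))
    (Finset.sum_nonneg fun i _ => integral_nonneg fun w => hℓ0 w _)
    fun hKL _ => catoni_of_catoniMoment_lt D hℓ0 hℓ1 c hℓ prior hδ0 (not_le.1 hlt) Q hKL

end Catoni

section DensityShift

variable {α : Type*} [MeasurableSpace α]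

lemma lintegral_withDensity_le_essSup_mul (μ : Measure α) (ρ g : α → ℝ≥0∞) :
    ∫⁻ x, g x ∂(μ.withDensity ρ) ≤ essSup ρ μ * ∫⁻ x, g x ∂μ := by
  have hle : μ.withDensity ρ ≤ essSup ρ μ • μ := Measure.le_iff.2 fun s hs => by
    rw [withDensity_apply _ hs, Measure.smul_apply, smul_eq_mul, ← setLIntegral_const]
    exact lintegral_mono_ae (ae_restrict_of_ae (ENNReal.ae_le_essSup ρ))
  calc _ ≤ ∫⁻ x, g x ∂(essSup ρ μ • μ) := lintegral_mono' hle le_rfl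
    _ = _ := lintegral_smul_measure _ _

lemma ofReal_integral_le_essSup_mul_add {μ ν : Measure α} {A : Set α} (hA : MeasurableSet A)
    {ρ : α → ℝ≥0∞} (hdens : ν.restrict A = μ.withDensity ρ) {g : α → ℝ} (hg : 0 ≤ g)
    (hgν : Integrable g ν) (hgμ : Integrable g μ) :
    ENNReal.ofReal (∫ x, g x ∂ν)
      ≤ essSup ρ μ * ENNReal.ofReal (∫ x, g x ∂μ) + ENNReal.ofReal (∫ x in Aᶜ, g x ∂ν) := by
  simp only [ofReal_integral_eq_lintegral_ofReal hgν (.of_forall hg),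
    ofReal_integral_eq_lintegral_ofReal hgμ (.of_forall hg),
    ofReal_integral_eq_lintegral_ofReal hgν.restrict (.of_forall hg)]
  rw [← lintegral_add_compl _ hA, hdens]
  gcongr
  exact lintegral_withDensity_le_essSup_mul μ ρ _

lemma setIntegral_eq_measureReal_mul_integral_cond (μ : Measure α) [IsFiniteMeasure μ]
    (s : Set α) (f : α → ℝ) : ∫ x in s, f x ∂μ = μ.real s * ∫ x, f x ∂μ[|s] := by
  rcases eq_or_ne (μ s) 0 with h | h
  · simp [Measure.restrict_eq_zero.2 h, measureReal_def, h]
  · rw [ProbabilityTheory.cond, integral_smul_measure, ENNReal.toReal_inv, smul_eq_mul,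
      ← mul_assoc, measureReal_def,
      mul_inv_cancel₀ (ENNReal.toReal_ne_zero.2 ⟨h, measure_ne_top _ _⟩), one_mul]

lemma integral_integral_le_iSup {Ω : Type*} [MeasurableSpace Ω] (Q : Measure Ω)
    [IsProbabilityMeasure Q] (ν : Measure α) [IsFiniteMeasure ν] {f : Ω → α → ℝ}
    (hf : Measurable (Function.uncurry f)) (h0 : ∀ h x, 0 ≤ f h x) (h1 : ∀ h x, f h x ≤ 1) :
    ∫ x, ∫ h, f h x ∂Q ∂ν ≤ ⨆ h, ∫ x, f h x ∂ν := by
  have hbdd : BddAbove (Set.range fun h => ∫ x, f h x ∂ν) := ⟨ν.real Set.univ, by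
    rintro _ ⟨h, rfl⟩
    exact (integral_mono_of_nonneg (.of_forall (h0 h)) (integrable_const 1)
      (.of_forall (h1 h))).trans_eq (by simp)⟩
  rw [← integral_integral_swap
    (integrable_of_nonneg_of_le_one hf (fun _ => h0 _ _) fun _ => h1 _ _)]
  exact (integral_mono_of_nonneg (.of_forall fun h => integral_nonneg (h0 h))
    (integrable_const _) (.of_forall fun h => le_ciSup hbdd h)).trans_eq (by simp)

end DensityShift

section PairLosses

variable {X Ω : Type*}

def disagreementLoss (ev : Ω → X → Bool) (w : Ω × Ω) (x : X) : ℝ :=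
  if ev w.1 x ≠ ev w.2 x then 1 else 0

def jointErrorLoss (ev : Ω → X → Bool) (w : Ω × Ω) (z : X × Bool) : ℝ :=
  if ev w.1 z.1 ≠ z.2 ∧ ev w.2 z.1 ≠ z.2 then 1 else 0

variable (ev : Ω → X → Bool)

lemma disagreementLoss_nonneg (w : Ω × Ω) (x : X) : 0 ≤ disagreementLoss ev w x :=
  ite_nonneg zero_le_one le_rfl

lemma disagreementLoss_le_one (w : Ω × Ω) (x : X) : disagreementLoss ev w x ≤ 1 :=
  ite_le_one le_rfl zero_le_one

lemma jointErrorLoss_nonneg (w : Ω × Ω) (z : X × Bool) : 0 ≤ jointErrorLoss ev w z :=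
  ite_nonneg zero_le_one le_rfl

lemma jointErrorLoss_le_one (w : Ω × Ω) (z : X × Bool) : jointErrorLoss ev w z ≤ 1 :=
  ite_le_one le_rfl zero_le_one

variable [MeasurableSpace Ω]

lemma integral_integral_ite_ne (Q : Measure Ω) [IsProbabilityMeasure Q] {a : Ω → Bool}
    (ha : Measurable a) (y : Bool) :
    ∫ h, ∫ h', (if a h ≠ a h' then (1 : ℝ) else 0) ∂Q ∂Q
      = 2 * (∫ h, (if a h ≠ y then (1 : ℝ) else 0) ∂Q)
          * (1 - ∫ h, (if a h ≠ y then (1 : ℝ) else 0) ∂Q) := by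
  set u : Ω → ℝ := fun h => if a h ≠ y then 1 else 0
  set q := ∫ h, u h ∂Q
  have hu : Integrable u Q := integrable_ite_ne ha measurable_const
  -- `a h ≠ a h'` iff exactly one of `h`, `h'` errs on the label `y`
  have hsplit (h h' : Ω) :
      (if a h ≠ a h' then (1 : ℝ) else 0) = u h + (1 - 2 * u h) * u h' := by
    simp only [u]; cases a h <;> cases a h' <;> cases y <;> norm_num
  have hinner (h : Ω) :
      ∫ h', (if a h ≠ a h' then (1 : ℝ) else 0) ∂Q = q + (1 - 2 * q) * u h := by
    simp only [hsplit, integral_add (integrable_const _) (hu.const_mul _), integral_const_mul,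
      integral_const, probReal_univ, one_smul]
    ring
  simp only [hinner, integral_add (integrable_const _) (hu.const_mul _), integral_const_mul,
    integral_const, probReal_univ, one_smul]
  ring

lemma integral_integral_ite_and (Q : Measure Ω) (P : Ω → Prop) [DecidablePred P] :
    ∫ h, ∫ h', (if P h ∧ P h' then (1 : ℝ) else 0) ∂Q ∂Q
      = (∫ h, (if P h then (1 : ℝ) else 0) ∂Q) ^ 2 := by
  have hmul (h h' : Ω) : (if P h ∧ P h' then (1 : ℝ) else 0)
      = (if P h then 1 else 0) * (if P h' then 1 else 0) := by
    split_ifs <;> simp_all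
  simp only [hmul, integral_const_mul, integral_mul_const, sq]

def gibbsError (Q : Measure Ω) (z : X × Bool) : ℝ :=
  ∫ h, (if ev h z.1 ≠ z.2 then 1 else 0) ∂Q

variable {ev} (Q : Measure Ω)

lemma gibbsError_nonneg (z : X × Bool) : 0 ≤ gibbsError ev Q z :=
  integral_nonneg fun _ => ite_nonneg zero_le_one le_rfl

variable [IsProbabilityMeasure Q]

lemma gibbsError_le_one (z : X × Bool) : gibbsError ev Q z ≤ 1 :=
  integral_le_one_of_nonneg_of_le_one (fun _ => ite_nonneg zero_le_one le_rfl)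
    fun _ => ite_le_one le_rfl zero_le_one

variable [MeasurableSpace X] (hev : Measurable (Function.uncurry ev))

include hev in
lemma measurable_disagreementLoss : Measurable (Function.uncurry (disagreementLoss ev)) :=
  measurable_ite_ne (measurable_uncurry_comp hev (by fun_prop) measurable_snd)
    (measurable_uncurry_comp hev (by fun_prop) measurable_snd)

include hev in
lemma measurable_jointErrorLoss : Measurable (Function.uncurry (jointErrorLoss ev)) :=
  Measurable.ite
    ((measurableSet_eq_fun (measurable_uncurry_comp hev (by fun_prop) (by fun_prop))
      (by fun_prop)).compl.inter
     (measurableSet_eq_fun (measurable_uncurry_comp hev (by fun_prop) (by fun_prop))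
      (by fun_prop)).compl)
    measurable_const measurable_const

include hev in
lemma measurable_gibbsError : Measurable (gibbsError ev Q) :=
  (measurable_ite_ne
    (measurable_uncurry_comp hev measurable_snd (measurable_fst.comp measurable_fst))
    (measurable_snd.comp measurable_fst)).stronglyMeasurable.integral_prod_right'.measurable

include hev in
lemma integrable_gibbsError (P : Measure (X × Bool)) [IsFiniteMeasure P] :
    Integrable (gibbsError ev Q) P :=
  integrable_of_nonneg_of_le_one (measurable_gibbsError Q hev) (gibbsError_nonneg Q)
    (gibbsError_le_one Q)

include hev in
lemma integrable_gibbsError_sq (P : Measure (X × Bool)) [IsFiniteMeasure P] :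
    Integrable (fun z => gibbsError ev Q z ^ 2) P :=
  integrable_of_nonneg_of_le_one ((measurable_gibbsError Q hev).pow_const 2)
    (fun _ => sq_nonneg _)
    fun z => pow_le_one₀ (gibbsError_nonneg Q z) (gibbsError_le_one Q z)

include hev in
lemma integral_prod_disagreementLoss (x : X) :
    ∫ w, disagreementLoss ev w x ∂(Q.prod Q)
      = ∫ h, ∫ h', (if ev h x ≠ ev h' x then (1 : ℝ) else 0) ∂Q ∂Q :=
  integral_prod _ (integrable_of_nonneg_of_le_one (measurable_disagreementLoss hev).of_uncurry_right
    (disagreementLoss_nonneg ev · x) (disagreementLoss_le_one ev · x))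

include hev in
lemma integral_prod_jointErrorLoss (z : X × Bool) :
    ∫ w, jointErrorLoss ev w z ∂(Q.prod Q)
      = ∫ h, ∫ h', (if ev h z.1 ≠ z.2 ∧ ev h' z.1 ≠ z.2 then (1 : ℝ) else 0) ∂Q ∂Q :=
  integral_prod _ (integrable_of_nonneg_of_le_one (measurable_jointErrorLoss hev).of_uncurry_right
    (jointErrorLoss_nonneg ev · z) (jointErrorLoss_le_one ev · z))

include hev in
lemma integral_disagreementLoss_eq (P : Measure (X × Bool)) [IsProbabilityMeasure P] :
    ∫ w, ∫ x, disagreementLoss ev w x ∂(P.map Prod.fst) ∂(Q.prod Q)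
      = ∫ z, 2 * gibbsError ev Q z * (1 - gibbsError ev Q z) ∂P := by
  have hm := measurable_disagreementLoss hev
  have hm' : StronglyMeasurable fun q : X × (Ω × Ω) => disagreementLoss ev q.2 q.1 :=
    (hm.comp measurable_swap).stronglyMeasurable
  rw [integral_integral_swap (integrable_of_nonneg_of_le_one hm
      (fun _ => disagreementLoss_nonneg ev _ _) fun _ => disagreementLoss_le_one ev _ _),
    integral_map measurable_fst.aemeasurable hm'.integral_prod_right'.aestronglyMeasurable]
  refine integral_congr_ae (.of_forall fun z => ?_)
  dsimp only
  rw [integral_prod_disagreementLoss Q hev]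
  exact integral_integral_ite_ne Q (measurable_uncurry_comp hev measurable_id measurable_const) z.2

include hev in
lemma integral_jointErrorLoss_eq (P : Measure (X × Bool)) [IsFiniteMeasure P] :
    ∫ w, ∫ z, jointErrorLoss ev w z ∂P ∂(Q.prod Q) = ∫ z, gibbsError ev Q z ^ 2 ∂P := by
  rw [integral_integral_swap (integrable_of_nonneg_of_le_one (measurable_jointErrorLoss hev)
    (fun _ => jointErrorLoss_nonneg ev _ _) fun _ => jointErrorLoss_le_one ev _ _)]
  refine integral_congr_ae (.of_forall fun z => ?_)
  dsimp only
  rw [integral_prod_jointErrorLoss Q hev]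
  exact integral_integral_ite_and Q (fun h => ev h z.1 ≠ z.2)

include hev in
lemma integral_gibbsError_eq (P : Measure (X × Bool)) [IsProbabilityMeasure P] :
    ∫ z, gibbsError ev Q z ∂P
      = 1 / 2 * ∫ z, 2 * gibbsError ev Q z * (1 - gibbsError ev Q z) ∂P
        + ∫ z, gibbsError ev Q z ^ 2 ∂P := by
  have hp := measurable_gibbsError Q hev
  have h0 := gibbsError_nonneg (ev := ev) Q
  have h1 := gibbsError_le_one (ev := ev) Q
  have hdis : Integrable (fun z => 2 * gibbsError ev Q z * (1 - gibbsError ev Q z)) P :=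
    integrable_of_nonneg_of_le_one (by fun_prop)
      (fun z => by nlinarith [h0 z, h1 z]) fun z => by nlinarith [h0 z, h1 z]
  rw [← integral_const_mul, ← integral_add (hdis.const_mul _) (integrable_gibbsError_sq Q hev P)]
  exact integral_congr_ae (.of_forall fun z => by ring)

include hev in
lemma ofReal_integral_gibbsError_sq_le {PS PT : Measure (X × Bool)} [IsProbabilityMeasure PS]
    [IsProbabilityMeasure PT] {A : Set (X × Bool)} (hA : MeasurableSet A) {ρ : X × Bool → ℝ≥0∞}
    (hdens : PT.restrict A = PS.withDensity ρ) :
    ENNReal.ofReal (∫ z, gibbsError ev Q z ^ 2 ∂PT)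
      ≤ essSup ρ PS * ENNReal.ofReal (∫ z, gibbsError ev Q z ^ 2 ∂PS)
        + ENNReal.ofReal ((PT Aᶜ).toReal *
            ⨆ h : Ω, ∫ z, (if ev h z.1 ≠ z.2 then (1 : ℝ) else 0) ∂(PT[|Aᶜ])) := by
  refine (ofReal_integral_le_essSup_mul_add hA hdens (fun _ => sq_nonneg _)
    (integrable_gibbsError_sq Q hev PT) (integrable_gibbsError_sq Q hev PS)).trans ?_
  gcongr
  calc ∫ z in Aᶜ, gibbsError ev Q z ^ 2 ∂PT ≤ ∫ z in Aᶜ, gibbsError ev Q z ∂PT :=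
        setIntegral_mono (integrable_gibbsError_sq Q hev PT).integrableOn
          (integrable_gibbsError Q hev PT).integrableOn
          fun z => sq_le (gibbsError_nonneg Q z) (gibbsError_le_one Q z)
    _ = PT.real Aᶜ * ∫ z, gibbsError ev Q z ∂PT[|Aᶜ] :=
        setIntegral_eq_measureReal_mul_integral_cond PT Aᶜ _
    _ ≤ _ := mul_le_mul_of_nonneg_left (integral_integral_le_iSup Q _
        (measurable_ite_ne (measurable_uncurry_comp hev measurable_fst (by fun_prop))
          (by fun_prop))
        (fun _ _ => ite_nonneg zero_le_one le_rfl) fun _ _ => ite_le_one le_rfl zero_le_one)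
        measureReal_nonneg

end PairLosses

lemma combine_catoni_bounds {a c' d Xt G β b' e Xs η : ℝ≥0∞} (ha : a ≤ 1) :
    a * (c' * d + c' / Xt * G) + (β * (b' * e + b' / Xs * G) + η)
      ≤ c' * (a * d) + b' * β * e + η + (c' / Xt + b' * β / Xs) * G :=
  calc _ = a * (c' / Xt * G) + (c' * (a * d) + b' * β * e + η + b' * β / Xs * G) := by
        simp only [div_eq_mul_inv]; ring
    _ ≤ c' / Xt * G + (c' * (a * d) + b' * β * e + η + b' * β / Xs * G) :=
        add_le_add (mul_le_of_le_one_left' ha) le_rfl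
    _ = _ := by simp only [div_eq_mul_inv]; ring

variable {X Ω : Type*} [MeasurableSpace X] [MeasurableSpace Ω] {ev : Ω → X → Bool}
  {PS PT : Measure (X × Bool)} [IsProbabilityMeasure PS] [IsProbabilityMeasure PT]
  {pr : Measure Ω} [IsProbabilityMeasure pr] {ms mt : ℕ} {b c δ : ℝ}

theorem gibbsRisk_le_of_catoni (hev : Measurable (Function.uncurry ev)) {A : Set (X × Bool)}
    (hA : MeasurableSet A) {ρ : X × Bool → ℝ≥0∞} (hdens : PT.restrict A = PS.withDensity ρ)
    (Q : Measure Ω) [IsProbabilityMeasure Q] {s : Fin ms → X × Bool} {t : Fin mt → X}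
    (hS : ENNReal.ofReal (∫ w, ∫ z, jointErrorLoss ev w z ∂PS ∂(Q.prod Q))
      ≤ catoniBound b ms ((1 / ms) * ∑ i, ∫ w, jointErrorLoss ev w (s i) ∂(Q.prod Q))
        (klDiv (Q.prod Q) (pr.prod pr) + ENNReal.ofReal (log (δ / 2)⁻¹)))
    (hT : ENNReal.ofReal (∫ w, ∫ x, disagreementLoss ev w x ∂(PT.map Prod.fst) ∂(Q.prod Q))
      ≤ catoniBound c mt ((1 / mt) * ∑ i, ∫ w, disagreementLoss ev w (t i) ∂(Q.prod Q))
        (klDiv (Q.prod Q) (pr.prod pr) + ENNReal.ofReal (log (δ / 2)⁻¹))) :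
    ENNReal.ofReal (∫ z, ∫ h, (if ev h z.1 ≠ z.2 then (1 : ℝ) else 0) ∂Q ∂PT)
      ≤ ENNReal.ofReal (c / (1 - exp (-c)))
          * ENNReal.ofReal ((1 / 2) * ((1 / (mt : ℝ)) * ∑ i : Fin mt, ∫ h, ∫ h',
              (if ev h (t i) ≠ ev h' (t i) then (1 : ℝ) else 0) ∂Q ∂Q))
        + (ENNReal.ofReal (b / (1 - exp (-b))) * essSup ρ PS)
          * ENNReal.ofReal ((1 / (ms : ℝ)) * ∑ i : Fin ms, ∫ h, ∫ h',
              (if ev h (s i).1 ≠ (s i).2 ∧ ev h' (s i).1 ≠ (s i).2 then (1 : ℝ) else 0) ∂Q ∂Q)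
        + ENNReal.ofReal ((PT Aᶜ).toReal *
            ⨆ h : Ω, ∫ z, (if ev h z.1 ≠ z.2 then (1 : ℝ) else 0) ∂(PT[|Aᶜ]))
        + (ENNReal.ofReal (c / (1 - exp (-c))) / ENNReal.ofReal ((mt : ℝ) * c)
            + (ENNReal.ofReal (b / (1 - exp (-b))) * essSup ρ PS) / ENNReal.ofReal ((ms : ℝ) * b))
          * (2 * klDivergence Q pr + ENNReal.ofReal (log (2 / δ))) := by
  have hKL : klDiv (Q.prod Q) (pr.prod pr) + ENNReal.ofReal (log (δ / 2)⁻¹)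
      ≤ 2 * klDivergence Q pr + ENNReal.ofReal (log (2 / δ)) := by
    rw [klDivergence_eq_klDiv, inv_div, two_mul]
    gcongr
    exact klDiv_prod_le Q pr Q pr
  simp only [integral_prod_jointErrorLoss Q hev, integral_jointErrorLoss_eq Q hev] at hS
  simp only [integral_prod_disagreementLoss Q hev, integral_disagreementLoss_eq Q hev] at hT
  change ENNReal.ofReal (∫ z, gibbsError ev Q z ∂PT) ≤ _
  rw [integral_gibbsError_eq Q hev]
  refine ENNReal.ofReal_add_le.trans ?_
  rw [ENNReal.ofReal_mul (by norm_num : (0 : ℝ) ≤ 1 / 2)]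
  grw [hT, ofReal_integral_gibbsError_sq_le Q hev hA hdens, hS]
  simp only [catoniBound]
  grw [hKL]
  rw [ENNReal.ofReal_mul (by norm_num : (0 : ℝ) ≤ 1 / 2)]
  exact combine_catoni_bounds (ENNReal.ofReal_le_one.2 (by norm_num))

end PacBayes

theorem pac_bayes_domain_adaptation_general
    {X : Type*} [MeasurableSpace X] {Ω : Type*} [MeasurableSpace Ω]
    (ev : Ω → X → Bool) (hev : Measurable (Function.uncurry ev))
    (PS PT : Measure (X × Bool)) [IsProbabilityMeasure PS] [IsProbabilityMeasure PT]
    (A : Set (X × Bool)) (hA : MeasurableSet A)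
    (ρ : X × Bool → ℝ≥0∞)
    (hdens : PT.restrict A = PS.withDensity ρ)
    (pr : Measure Ω) [IsProbabilityMeasure pr]
    (ms mt : ℕ) (b c : ℝ) (hb : 0 < b) (hc : 0 < c)
    (δ : ℝ) (hδ0 : 0 < δ) (hδ1 : δ ≤ 1) :
    -- b' = (b/(1-e^{-b})) β_∞  and  c' = c/(1-e^{-c})
    ENNReal.ofReal (1 - δ) ≤
      ((Measure.pi fun _ : Fin ms => PS).prod (Measure.pi fun _ : Fin mt => PT.map Prod.fst))
        {ST | ∀ Q : Measure Ω, IsProbabilityMeasure Q →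
          -- R_{P_T}(G_Q) ≤ c'·(1/2)·d̂_T(Q) + b'·ê_S(Q) + η_{T∖S}
          --               + (c'/(m_t c) + b'/(m_s b)) (2 KL(Q‖π) + ln(2/δ))
          ENNReal.ofReal (∫ z, ∫ h, (if ev h z.1 ≠ z.2 then (1 : ℝ) else 0) ∂Q ∂PT)
            ≤ ENNReal.ofReal (c / (1 - Real.exp (-c)))
                * ENNReal.ofReal ((1 / 2) * ((1 / (mt : ℝ)) * ∑ i : Fin mt, ∫ h, ∫ h',
                    (if ev h (ST.2 i) ≠ ev h' (ST.2 i) then (1 : ℝ) else 0) ∂Q ∂Q))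
              + (ENNReal.ofReal (b / (1 - Real.exp (-b))) * essSup ρ PS)
                * ENNReal.ofReal ((1 / (ms : ℝ)) * ∑ i : Fin ms, ∫ h, ∫ h',
                    (if ev h (ST.1 i).1 ≠ (ST.1 i).2 ∧ ev h' (ST.1 i).1 ≠ (ST.1 i).2
                      then (1 : ℝ) else 0) ∂Q ∂Q)
              + ENNReal.ofReal ((PT Aᶜ).toReal *
                  ⨆ h : Ω, ∫ z, (if ev h z.1 ≠ z.2 then (1 : ℝ) else 0) ∂(PT[|Aᶜ]))
              + (ENNReal.ofReal (c / (1 - Real.exp (-c))) / ENNReal.ofReal ((mt : ℝ) * c)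
                  + (ENNReal.ofReal (b / (1 - Real.exp (-b))) * essSup ρ PS)
                      / ENNReal.ofReal ((ms : ℝ) * b))
                * (2 * klDivergence Q pr + ENNReal.ofReal (Real.log (2 / δ)))} := by
  have := Measure.isProbabilityMeasure_map (μ := PT) measurable_fst.aemeasurable
  have hδ2 : δ / 2 < 1 := by linarith
  have hS := PacBayes.catoni_bound PS (PacBayes.jointErrorLoss_nonneg ev)
    (PacBayes.jointErrorLoss_le_one ev) b (m := ms) (PacBayes.measurable_jointErrorLoss hev)
    (pr.prod pr) hb (half_pos hδ0) hδ2
  have hT := PacBayes.catoni_bound (PT.map Prod.fst) (PacBayes.disagreementLoss_nonneg ev)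
    (PacBayes.disagreementLoss_le_one ev) c (m := mt) (PacBayes.measurable_disagreementLoss hev)
    (pr.prod pr) hc (half_pos hδ0) hδ2
  calc ENNReal.ofReal (1 - δ) ≤ ENNReal.ofReal (1 - δ / 2) * ENNReal.ofReal (1 - δ / 2) := by
        rw [← ENNReal.ofReal_mul (by linarith)]
        exact ENNReal.ofReal_le_ofReal (by nlinarith)
    _ ≤ _ := mul_le_mul' hS hT
    _ = _ := (Measure.prod_prod _ _).symm
    _ ≤ _ := measure_mono ?_
  rintro ⟨s, t⟩ ⟨hs, ht⟩ Q _
  exact PacBayes.gibbsRisk_le_of_catoni hev hA hdens Q (hs _ inferInstance) (ht _ inferInstance)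

theorem pac_bayes_domain_adaptation
    {X : Type*} [MeasurableSpace X] {Ω : Type*} [MeasurableSpace Ω]
    (ev : Ω → X → Bool) (hev : Measurable (Function.uncurry ev))
    (PS PT : Measure (X × Bool)) [IsProbabilityMeasure PS] [IsProbabilityMeasure PT]
    (A : Set (X × Bool)) (hA : MeasurableSet A) (hSA : PS Aᶜ = 0)
    (ρ : X × Bool → ℝ≥0∞) (hρ : Measurable ρ)
    (hdens : PT.restrict A = PS.withDensity ρ)
    (pr : Measure Ω) [IsProbabilityMeasure pr]
    (ms mt : ℕ) (b c : ℝ) (hb : 0 < b) (hc : 0 < c)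
    (δ : ℝ) (hδ0 : 0 < δ) (hδ1 : δ ≤ 1) :
    -- b' = (b/(1-e^{-b})) β_∞  and  c' = c/(1-e^{-c})
    ENNReal.ofReal (1 - δ) ≤
      ((Measure.pi fun _ : Fin ms => PS).prod (Measure.pi fun _ : Fin mt => PT.map Prod.fst))
        {ST | ∀ Q : Measure Ω, IsProbabilityMeasure Q →
          -- R_{P_T}(G_Q) ≤ c'·(1/2)·d̂_T(Q) + b'·ê_S(Q) + η_{T∖S}
          --               + (c'/(m_t c) + b'/(m_s b)) (2 KL(Q‖π) + ln(2/δ))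
          ENNReal.ofReal (∫ z, ∫ h, (if ev h z.1 ≠ z.2 then (1 : ℝ) else 0) ∂Q ∂PT)
            ≤ ENNReal.ofReal (c / (1 - Real.exp (-c)))
                * ENNReal.ofReal ((1 / 2) * ((1 / (mt : ℝ)) * ∑ i : Fin mt, ∫ h, ∫ h',
                    (if ev h (ST.2 i) ≠ ev h' (ST.2 i) then (1 : ℝ) else 0) ∂Q ∂Q))
              + (ENNReal.ofReal (b / (1 - Real.exp (-b))) * essSup ρ PS)
                * ENNReal.ofReal ((1 / (ms : ℝ)) * ∑ i : Fin ms, ∫ h, ∫ h',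
                    (if ev h (ST.1 i).1 ≠ (ST.1 i).2 ∧ ev h' (ST.1 i).1 ≠ (ST.1 i).2
                      then (1 : ℝ) else 0) ∂Q ∂Q)
              + ENNReal.ofReal ((PT Aᶜ).toReal *
                  ⨆ h : Ω, ∫ z, (if ev h z.1 ≠ z.2 then (1 : ℝ) else 0) ∂(PT[|Aᶜ]))
              + (ENNReal.ofReal (c / (1 - Real.exp (-c))) / ENNReal.ofReal ((mt : ℝ) * c)
                  + (ENNReal.ofReal (b / (1 - Real.exp (-b))) * essSup ρ PS)
                      / ENNReal.ofReal ((ms : ℝ) * b))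
                * (2 * klDivergence Q pr + ENNReal.ofReal (Real.log (2 / δ)))} :=
  pac_bayes_domain_adaptation_general ev hev PS PT A hA ρ hdens pr ms mt b c hb hc δ hδ0 hδ1
end
end
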